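/- Let 0 < q < ∞, s₀, s₁ ∈ ℝ, 0 < p₀ < p₁ < ∞. The K_q-functional of the mixed-norm couple commutes with summation over layers: K_q(t, f, ℓ̃^{s₀,q}_{p₀}, ℓ̃^{s₁,q}_{p₁}) ≍ (Σ_{j≥0} 2^{qj(s₀+n/2−n/p₀)} K(t·2^{j s̃}, f_j, ℓ^{p₀}(Γ), ℓ^{p₁}(Γ))^q)^{1/q}, where s̃ = s₁ − s₀ + n/p₀ − n/p₁ and f_j = (|f_{j,γ}|)_γ. -/

import Mathlib

open Set ENNReal

/-- `ℓ^p` quasi-norm (in `ℝ≥0∞`) of an `ℝ≥0∞`-valued sequence; supremum when `p = ∞`. -/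
noncomputable def elp (p : ℝ≥0∞) {Γ : Type*} (g : Γ → ℝ≥0∞) : ℝ≥0∞ :=
  if p = ∞ then ⨆ γ, g γ else (∑' γ, g γ ^ p.toReal) ^ (1 / p.toReal)

/-- The mixed quasi-norm of `ℓ̃^{s,q}_p`:
`(Σ_j (2^{j(s+n/2-n/p)} ‖f_j‖_{ℓ^p(Γ)})^q)^{1/q}` (supremum when `q = ∞`). -/
noncomputable def mixedNorm (n : ℕ) (s : ℝ) (p q : ℝ≥0∞) {Γ : Type*}
    (f : ℕ → Γ → ℝ≥0∞) : ℝ≥0∞ :=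
  elp q (fun j : ℕ =>
    ENNReal.ofReal ((2:ℝ) ^ ((j:ℝ) * (s + (n:ℝ)/2 - (n:ℝ) / p.toReal))) * elp p (f j))

/-- K-functional of the mixed-norm couple. -/
noncomputable def Kmix (n : ℕ) (s₀ s₁ : ℝ) (p₀ p₁ q : ℝ≥0∞) {Γ : Type*}
    (t : ℝ≥0∞) (f : ℕ → Γ → ℝ≥0∞) : ℝ≥0∞ :=
  ⨅ (g : ℕ → Γ → ℝ≥0∞) (h : ℕ → Γ → ℝ≥0∞) (_ : f = g + h),
    mixedNorm n s₀ p₀ q g + t * mixedNorm n s₁ p₁ q h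

/-- Single-layer K-functional of `(ℓ^{p₀}(Γ), ℓ^{p₁}(Γ))`. -/
noncomputable def Klayer (p₀ p₁ : ℝ≥0∞) {Γ : Type*} (t : ℝ≥0∞) (fj : Γ → ℝ≥0∞) : ℝ≥0∞ :=
  ⨅ (g : Γ → ℝ≥0∞) (h : Γ → ℝ≥0∞) (_ : fj = g + h), elp p₀ g + t * elp p₁ h

/-- The `K_q` functional of the mixed-norm couple:
`inf_{f=g+h} (‖g‖^q + t^q ‖h‖^q)^{1/q}`. -/
noncomputable def Kqmix (n : ℕ) (s₀ s₁ : ℝ) (p₀ p₁ q : ℝ≥0∞) {Γ : Type*}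
    (t : ℝ≥0∞) (f : ℕ → Γ → ℝ≥0∞) : ℝ≥0∞ :=
  ⨅ (g : ℕ → Γ → ℝ≥0∞) (h : ℕ → Γ → ℝ≥0∞) (_ : f = g + h),
    (mixedNorm n s₀ p₀ q g ^ q.toReal + t ^ q.toReal * mixedNorm n s₁ p₁ q h ^ q.toReal) ^
      (1 / q.toReal)

private lemma iInf_rpow_comm {r : ℝ} (hr : 0 < r) {ι : Sort*} (u : ι → ℝ≥0∞) :
    (⨅ i, u i) ^ r = ⨅ i, u i ^ r := by
  have h := (ENNReal.orderIsoRpow r hr).map_iInf u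
  simp only [ENNReal.orderIsoRpow_apply] at h
  exact h

private lemma iInf3_rpow {α β : Sort*} (P : α → β → Prop) (u : α → β → ℝ≥0∞) {r : ℝ}
    (hr : 0 < r) :
    (⨅ (a : α) (b : β) (_ : P a b), u a b) ^ r = ⨅ (a : α) (b : β) (_ : P a b), u a b ^ r := by
  simp_rw [iInf_rpow_comm hr]

private lemma mul_iInf3 {α β : Sort*} (P : α → β → Prop) (u : α → β → ℝ≥0∞) {c : ℝ≥0∞}
    (h0 : c ≠ 0) (hi : c ≠ ∞) :
    c * ⨅ (a : α) (b : β) (_ : P a b), u a b = ⨅ (a : α) (b : β) (_ : P a b), c * u a b := by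
  simp_rw [ENNReal.mul_iInf_of_ne h0 hi]

private lemma elp_rpow {Γ : Type*} (p : ℝ≥0∞) (hp : p ≠ ∞) (hp0 : p.toReal ≠ 0)
    (g : Γ → ℝ≥0∞) : elp p g ^ p.toReal = ∑' γ, g γ ^ p.toReal := by
  rw [elp, if_neg hp, ← ENNReal.rpow_mul, one_div, inv_mul_cancel₀ hp0, ENNReal.rpow_one]

private lemma rpow_add_le_two_mul (A B : ℝ≥0∞) {r : ℝ} (hr : 0 ≤ r) :
    A ^ r + B ^ r ≤ 2 * (A + B) ^ r := by
  calc A ^ r + B ^ r ≤ (A + B) ^ r + (A + B) ^ r :=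
        add_le_add (ENNReal.rpow_le_rpow le_self_add hr) (ENNReal.rpow_le_rpow le_add_self hr)
    _ = 2 * (A + B) ^ r := (two_mul _).symm

private lemma add_rpow_le_two_rpow (A B : ℝ≥0∞) {r : ℝ} (hr : 0 ≤ r) :
    (A + B) ^ r ≤ 2 ^ r * (A ^ r + B ^ r) := by
  have h : A + B ≤ 2 * (A ⊔ B) := by
    rw [two_mul]; exact add_le_add le_sup_left le_sup_right
  calc (A + B) ^ r ≤ (2 * (A ⊔ B)) ^ r := ENNReal.rpow_le_rpow h hr
    _ = 2 ^ r * (A ⊔ B) ^ r := ENNReal.mul_rpow_of_nonneg _ _ hr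
    _ ≤ 2 ^ r * (A ^ r + B ^ r) := by
        gcongr
        rcases le_total A B with h' | h'
        · rw [sup_eq_right.2 h']; exact le_add_self
        · rw [sup_eq_left.2 h']; exact le_self_add

private lemma iInf_decomp_tsum {Γ : Type*} (f : ℕ → Γ → ℝ≥0∞)
    (F : ℕ → (Γ → ℝ≥0∞) → (Γ → ℝ≥0∞) → ℝ≥0∞) :
    (⨅ (g : ℕ → Γ → ℝ≥0∞) (h : ℕ → Γ → ℝ≥0∞) (_ : f = g + h), ∑' j, F j (g j) (h j))
      = ∑' j, ⨅ (a : Γ → ℝ≥0∞) (b : Γ → ℝ≥0∞) (_ : f j = a + b), F j a b := by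
  refine le_antisymm ?_ ?_
  · by_cases hS : (∑' j, ⨅ (a : Γ → ℝ≥0∞) (b : Γ → ℝ≥0∞) (_ : f j = a + b), F j a b) = ∞
    · rw [hS]; exact le_top
    · refine ENNReal.le_of_forall_pos_le_add fun ε hε _ => ?_
      obtain ⟨δ, hδ0, hδsum⟩ :=
        ENNReal.exists_pos_sum_of_countable' (ε := (ε : ℝ≥0∞))
          (by exact_mod_cast hε.ne') ℕ
      have hfin : ∀ j, (⨅ (a : Γ → ℝ≥0∞) (b : Γ → ℝ≥0∞) (_ : f j = a + b), F j a b) ≠ ∞ :=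
        fun j => ne_top_of_le_ne_top hS (ENNReal.le_tsum j)
      have hex : ∀ j, ∃ a b, ∃ _ : f j = a + b,
          F j a b < (⨅ (a : Γ → ℝ≥0∞) (b : Γ → ℝ≥0∞) (_ : f j = a + b), F j a b) + δ j := by
        intro j
        have hlt := ENNReal.lt_add_right (hfin j) (hδ0 j).ne'
        simpa only [iInf_lt_iff] using hlt
      choose a b hab hFab using hex
      have hfab : f = a + b := funext fun j => hab j
      calc (⨅ (g : ℕ → Γ → ℝ≥0∞) (h : ℕ → Γ → ℝ≥0∞) (_ : f = g + h), ∑' j, F j (g j) (h j))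
          ≤ ∑' j, F j (a j) (b j) := iInf_le_of_le a (iInf_le_of_le b (iInf_le _ hfab))
        _ ≤ ∑' j, ((⨅ (a : Γ → ℝ≥0∞) (b : Γ → ℝ≥0∞) (_ : f j = a + b), F j a b) + δ j) :=
            ENNReal.tsum_le_tsum fun j => (hFab j).le
        _ = (∑' j, ⨅ (a : Γ → ℝ≥0∞) (b : Γ → ℝ≥0∞) (_ : f j = a + b), F j a b) + ∑' j, δ j :=
            ENNReal.tsum_add
        _ ≤ _ := add_le_add_right hδsum.le _
  · refine le_iInf fun g => le_iInf fun h => le_iInf fun hf => ENNReal.tsum_le_tsum fun j => ?_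
    exact iInf_le_of_le (g j) (iInf_le_of_le (h j) (iInf_le _ (by rw [hf]; rfl)))

private lemma key {Γ : Type*} (u₀ u₁ : (Γ → ℝ≥0∞) → ℝ≥0∞) (W E : ℕ → ℝ≥0∞)
    (hW0 : ∀ j, W j ≠ 0) (hWt : ∀ j, W j ≠ ∞) (hE0 : ∀ j, E j ≠ 0) (hEt : ∀ j, E j ≠ ∞)
    {r : ℝ} (hr : 0 < r) (t : ℝ≥0∞) (f : ℕ → Γ → ℝ≥0∞) :
    (⨅ (g : ℕ → Γ → ℝ≥0∞) (h : ℕ → Γ → ℝ≥0∞) (_ : f = g + h),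
        ((∑' j, (W j * u₀ (g j)) ^ r) + t ^ r * ∑' j, (W j * E j * u₁ (h j)) ^ r) ^ (1/r))
      ≤ (2:ℝ≥0∞) ^ (1/r) *
        (∑' j, (W j * ⨅ (a : Γ → ℝ≥0∞) (b : Γ → ℝ≥0∞) (_ : f j = a + b),
            (u₀ a + t * E j * u₁ b)) ^ r) ^ (1/r)
    ∧ (∑' j, (W j * ⨅ (a : Γ → ℝ≥0∞) (b : Γ → ℝ≥0∞) (_ : f j = a + b),
            (u₀ a + t * E j * u₁ b)) ^ r) ^ (1/r)
      ≤ 2 * ⨅ (g : ℕ → Γ → ℝ≥0∞) (h : ℕ → Γ → ℝ≥0∞) (_ : f = g + h),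
        ((∑' j, (W j * u₀ (g j)) ^ r) + t ^ r * ∑' j, (W j * E j * u₁ (h j)) ^ r) ^ (1/r) := by
  have h1r : (0:ℝ) < 1/r := by positivity
  -- rewrite the K_q-type infimum as a power of an infimum
  rw [← iInf3_rpow (fun (g h : ℕ → Γ → ℝ≥0∞) => f = g + h)
      (fun g h => (∑' j, (W j * u₀ (g j)) ^ r) + t ^ r * ∑' j, (W j * E j * u₁ (h j)) ^ r) h1r]
  -- the infimum decomposes layerwise
  have hKQ : (⨅ (g : ℕ → Γ → ℝ≥0∞) (h : ℕ → Γ → ℝ≥0∞) (_ : f = g + h),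
        ((∑' j, (W j * u₀ (g j)) ^ r) + t ^ r * ∑' j, (W j * E j * u₁ (h j)) ^ r))
      = ∑' j, ⨅ (a : Γ → ℝ≥0∞) (b : Γ → ℝ≥0∞) (_ : f j = a + b),
          ((W j * u₀ a) ^ r + t ^ r * (W j * E j * u₁ b) ^ r) := by
    rw [← iInf_decomp_tsum f
      (fun j a b => (W j * u₀ a) ^ r + t ^ r * (W j * E j * u₁ b) ^ r)]
    refine iInf_congr fun g => iInf_congr fun h => iInf_congr fun _ => ?_
    rw [ENNReal.tsum_add, ENNReal.tsum_mul_left]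
  rw [hKQ]
  -- the weighted layer K-functional, in infimum form
  have hT : ∀ j, (W j * ⨅ (a : Γ → ℝ≥0∞) (b : Γ → ℝ≥0∞) (_ : f j = a + b),
        (u₀ a + t * E j * u₁ b)) ^ r
      = ⨅ (a : Γ → ℝ≥0∞) (b : Γ → ℝ≥0∞) (_ : f j = a + b),
          (W j * u₀ a + t * (W j * E j) * u₁ b) ^ r := by
    intro j
    rw [mul_iInf3 _ _ (hW0 j) (hWt j), iInf3_rpow _ _ hr]
    refine iInf_congr fun a => iInf_congr fun b => iInf_congr fun _ => ?_
    rw [mul_add, show W j * (t * E j * u₁ b) = t * (W j * E j) * u₁ b by ring]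
  -- termwise comparisons
  have hIT : ∀ j, (⨅ (a : Γ → ℝ≥0∞) (b : Γ → ℝ≥0∞) (_ : f j = a + b),
        ((W j * u₀ a) ^ r + t ^ r * (W j * E j * u₁ b) ^ r))
      ≤ 2 * (W j * ⨅ (a : Γ → ℝ≥0∞) (b : Γ → ℝ≥0∞) (_ : f j = a + b),
          (u₀ a + t * E j * u₁ b)) ^ r := by
    intro j
    rw [hT j, mul_iInf3 _ _ two_ne_zero ENNReal.ofNat_ne_top]
    refine le_iInf fun a => le_iInf fun b => le_iInf fun hab => ?_
    calc (⨅ (a : Γ → ℝ≥0∞) (b : Γ → ℝ≥0∞) (_ : f j = a + b),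
          ((W j * u₀ a) ^ r + t ^ r * (W j * E j * u₁ b) ^ r))
        ≤ (W j * u₀ a) ^ r + t ^ r * (W j * E j * u₁ b) ^ r :=
          iInf_le_of_le a (iInf_le_of_le b (iInf_le _ hab))
      _ = (W j * u₀ a) ^ r + (t * (W j * E j) * u₁ b) ^ r := by
          rw [← ENNReal.mul_rpow_of_nonneg _ _ hr.le]; ring_nf
      _ ≤ 2 * (W j * u₀ a + t * (W j * E j) * u₁ b) ^ r :=
          rpow_add_le_two_mul _ _ hr.le
  have hTI : ∀ j, (W j * ⨅ (a : Γ → ℝ≥0∞) (b : Γ → ℝ≥0∞) (_ : f j = a + b),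
        (u₀ a + t * E j * u₁ b)) ^ r
      ≤ 2 ^ r * ⨅ (a : Γ → ℝ≥0∞) (b : Γ → ℝ≥0∞) (_ : f j = a + b),
          ((W j * u₀ a) ^ r + t ^ r * (W j * E j * u₁ b) ^ r) := by
    intro j
    have h2r0 : ((2:ℝ≥0∞) ^ r) ≠ 0 := (ENNReal.rpow_pos (by norm_num) ENNReal.ofNat_ne_top).ne'
    have h2rt : ((2:ℝ≥0∞) ^ r) ≠ ∞ := ENNReal.rpow_ne_top_of_nonneg hr.le ENNReal.ofNat_ne_top
    rw [hT j, mul_iInf3 _ _ h2r0 h2rt]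
    refine le_iInf fun a => le_iInf fun b => le_iInf fun hab => ?_
    calc (⨅ (a : Γ → ℝ≥0∞) (b : Γ → ℝ≥0∞) (_ : f j = a + b),
          (W j * u₀ a + t * (W j * E j) * u₁ b) ^ r)
        ≤ (W j * u₀ a + t * (W j * E j) * u₁ b) ^ r :=
          iInf_le_of_le a (iInf_le_of_le b (iInf_le _ hab))
      _ ≤ 2 ^ r * ((W j * u₀ a) ^ r + (t * (W j * E j) * u₁ b) ^ r) :=
          add_rpow_le_two_rpow _ _ hr.le
      _ = 2 ^ r * ((W j * u₀ a) ^ r + t ^ r * (W j * E j * u₁ b) ^ r) := by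
          rw [← ENNReal.mul_rpow_of_nonneg _ _ hr.le]; ring_nf
  constructor
  · calc (∑' j, ⨅ (a : Γ → ℝ≥0∞) (b : Γ → ℝ≥0∞) (_ : f j = a + b),
          ((W j * u₀ a) ^ r + t ^ r * (W j * E j * u₁ b) ^ r)) ^ (1/r)
        ≤ (2 * ∑' j, (W j * ⨅ (a : Γ → ℝ≥0∞) (b : Γ → ℝ≥0∞) (_ : f j = a + b),
            (u₀ a + t * E j * u₁ b)) ^ r) ^ (1/r) := by
          refine ENNReal.rpow_le_rpow ?_ h1r.le
          rw [← ENNReal.tsum_mul_left]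
          exact ENNReal.tsum_le_tsum hIT
      _ = (2:ℝ≥0∞) ^ (1/r) * (∑' j, (W j * ⨅ (a : Γ → ℝ≥0∞) (b : Γ → ℝ≥0∞)
            (_ : f j = a + b), (u₀ a + t * E j * u₁ b)) ^ r) ^ (1/r) :=
          ENNReal.mul_rpow_of_nonneg _ _ h1r.le
  · calc (∑' j, (W j * ⨅ (a : Γ → ℝ≥0∞) (b : Γ → ℝ≥0∞) (_ : f j = a + b),
          (u₀ a + t * E j * u₁ b)) ^ r) ^ (1/r)
        ≤ (2 ^ r * ∑' j, ⨅ (a : Γ → ℝ≥0∞) (b : Γ → ℝ≥0∞) (_ : f j = a + b),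
            ((W j * u₀ a) ^ r + t ^ r * (W j * E j * u₁ b) ^ r)) ^ (1/r) := by
          refine ENNReal.rpow_le_rpow ?_ h1r.le
          rw [← ENNReal.tsum_mul_left]
          exact ENNReal.tsum_le_tsum hTI
      _ = ((2:ℝ≥0∞) ^ r) ^ (1/r) * (∑' j, ⨅ (a : Γ → ℝ≥0∞) (b : Γ → ℝ≥0∞)
            (_ : f j = a + b), ((W j * u₀ a) ^ r + t ^ r * (W j * E j * u₁ b) ^ r)) ^ (1/r) :=
          ENNReal.mul_rpow_of_nonneg _ _ h1r.le
      _ = 2 * (∑' j, ⨅ (a : Γ → ℝ≥0∞) (b : Γ → ℝ≥0∞) (_ : f j = a + b),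
            ((W j * u₀ a) ^ r + t ^ r * (W j * E j * u₁ b) ^ r)) ^ (1/r) := by
          rw [← ENNReal.rpow_mul, mul_one_div, div_self hr.ne', ENNReal.rpow_one]

/-- For `0 < q < ∞` and `0 < p₀ < p₁ < ∞`, the `K_q` functional of the mixed-norm
couple commutes with summation over layers:
`K_q(t,f) ≍ (Σ_j 2^{qj(s₀+n/2-n/p₀)} K(t·2^{js̃}, f_j, ℓ^{p₀}, ℓ^{p₁})^q)^{1/q}`
with `s̃ = s₁ - s₀ + n/p₀ - n/p₁`. -/
theorem stmt16 {Γ : Type*} [Countable Γ] (n : ℕ) (s₀ s₁ : ℝ) (p₀ p₁ q : ℝ≥0∞)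
    (hp₀ : 0 < p₀) (hp₀₁ : p₀ < p₁) (hp₁ : p₁ < ∞) (hq : 0 < q) (hq' : q < ∞) :
    ∃ C : ℝ≥0∞, 0 < C ∧ C ≠ ∞ ∧ ∀ (f : ℕ → Γ → ℝ≥0∞) (t : ℝ≥0∞), 0 < t →
      Kqmix n s₀ s₁ p₀ p₁ q t f ≤
        C * (∑' j : ℕ, (ENNReal.ofReal ((2:ℝ) ^ ((j:ℝ) * (s₀ + (n:ℝ)/2 - (n:ℝ)/p₀.toReal))) *
          Klayer p₀ p₁
            (t * ENNReal.ofReal ((2:ℝ) ^ ((j:ℝ) * (s₁ - s₀ + (n:ℝ)/p₀.toReal - (n:ℝ)/p₁.toReal))))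
            (f j)) ^ q.toReal) ^ (1 / q.toReal) ∧
      (∑' j : ℕ, (ENNReal.ofReal ((2:ℝ) ^ ((j:ℝ) * (s₀ + (n:ℝ)/2 - (n:ℝ)/p₀.toReal))) *
          Klayer p₀ p₁
            (t * ENNReal.ofReal ((2:ℝ) ^ ((j:ℝ) * (s₁ - s₀ + (n:ℝ)/p₀.toReal - (n:ℝ)/p₁.toReal))))
            (f j)) ^ q.toReal) ^ (1 / q.toReal) ≤ C * Kqmix n s₀ s₁ p₀ p₁ q t f := by
  have hr : 0 < q.toReal := ENNReal.toReal_pos hq.ne' hq'.ne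
  have h1r : (0:ℝ) ≤ 1 / q.toReal := by positivity
  -- the constant
  refine ⟨2 * (2:ℝ≥0∞) ^ (1 / q.toReal),
    ENNReal.mul_pos (by norm_num) (ENNReal.rpow_pos (by norm_num) ENNReal.ofNat_ne_top).ne',
    ENNReal.mul_ne_top ENNReal.ofNat_ne_top
      (ENNReal.rpow_ne_top_of_nonneg h1r ENNReal.ofNat_ne_top), fun f t ht => ?_⟩
  set W : ℕ → ℝ≥0∞ :=
    fun j => ENNReal.ofReal ((2:ℝ) ^ ((j:ℝ) * (s₀ + (n:ℝ)/2 - (n:ℝ)/p₀.toReal))) with hWdef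
  set E : ℕ → ℝ≥0∞ :=
    fun j => ENNReal.ofReal ((2:ℝ) ^ ((j:ℝ) * (s₁ - s₀ + (n:ℝ)/p₀.toReal - (n:ℝ)/p₁.toReal)))
    with hEdef
  have hW0 : ∀ j, W j ≠ 0 := fun j =>
    (ENNReal.ofReal_pos.2 (Real.rpow_pos_of_pos two_pos _)).ne'
  have hWt : ∀ j, W j ≠ ∞ := fun j => ENNReal.ofReal_ne_top
  have hE0 : ∀ j, E j ≠ 0 := fun j =>
    (ENNReal.ofReal_pos.2 (Real.rpow_pos_of_pos two_pos _)).ne'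
  have hEt : ∀ j, E j ≠ ∞ := fun j => ENNReal.ofReal_ne_top
  have hWE : ∀ j : ℕ,
      ENNReal.ofReal ((2:ℝ) ^ ((j:ℝ) * (s₁ + (n:ℝ)/2 - (n:ℝ)/p₁.toReal))) = W j * E j := by
    intro j
    have hexp : (j:ℝ) * (s₁ + (n:ℝ)/2 - (n:ℝ)/p₁.toReal)
        = (j:ℝ) * (s₀ + (n:ℝ)/2 - (n:ℝ)/p₀.toReal)
          + (j:ℝ) * (s₁ - s₀ + (n:ℝ)/p₀.toReal - (n:ℝ)/p₁.toReal) := by ring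
    rw [hexp, Real.rpow_add two_pos,
      ENNReal.ofReal_mul (Real.rpow_pos_of_pos two_pos _).le]
  obtain ⟨h1, h2⟩ := key (elp p₀) (elp p₁) W E hW0 hWt hE0 hEt hr t f
  have hKq : Kqmix n s₀ s₁ p₀ p₁ q t f
      = ⨅ (g : ℕ → Γ → ℝ≥0∞) (h : ℕ → Γ → ℝ≥0∞) (_ : f = g + h),
          ((∑' j, (W j * elp p₀ (g j)) ^ q.toReal)
            + t ^ q.toReal * ∑' j, (W j * E j * elp p₁ (h j)) ^ q.toReal) ^ (1 / q.toReal) := by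
    rw [Kqmix]
    refine iInf_congr fun g => iInf_congr fun h => iInf_congr fun _ => ?_
    rw [mixedNorm, mixedNorm, elp_rpow q hq'.ne hr.ne', elp_rpow q hq'.ne hr.ne']
    simp_rw [hWE]
    rfl
  refine ⟨?_, ?_⟩
  · rw [hKq]
    simp only [Klayer]
    refine le_trans h1 (mul_le_mul_left ?_ _)
    exact le_mul_of_one_le_left zero_le one_le_two
  · rw [hKq]
    simp only [Klayer]
    refine le_trans h2 (mul_le_mul_left ?_ _)
    have : (1:ℝ≥0∞) ≤ 2 ^ (1 / q.toReal) := by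
      calc (1:ℝ≥0∞) = 2 ^ (0:ℝ) := ENNReal.rpow_zero.symm
        _ ≤ 2 ^ (1 / q.toReal) := ENNReal.rpow_le_rpow_of_exponent_le one_le_two h1r
    exact le_mul_of_one_le_right zero_le this
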